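/- Let $s_1, \ldots, s_n \in [0,1]$ be a finite population with mean $\mu = \frac{1}{n}\sum_{j=1}^n s_j$, let $X_1, \ldots, X_p$ (with $1 \le p \le n$) be drawn uniformly at random without replacement from this population, and fix $\delta \in (0,1)$. If $a \ge \frac{25}{2}\log\frac{2}{\delta}$, then with probability at least $1 - \delta$ the empirical mean satisfies $\left|\frac{X_1 + \cdots + X_p}{p} - \mu\right| < \frac{1}{5}\sqrt{\frac{a}{p}}$; in particular, the upper confidence bound $\frac{X_1 + \cdots + X_p}{p} + \sqrt{\frac{a}{p}}$ exceeds $\mu$ with probability at least $1 - \delta$. -/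

import Mathlib

open scoped Classical BigOperators

/-! For `x ≥ 0`, the average of `∏ j, x (σ j)` over the injections `σ : Fin p ↪ α` is at most
`(mean x) ^ p`: this Maclaurin-type inequality follows by induction on `p` from the positive
correlation of `∏ j, x (τ j)` and `∑ l, x (τ l)`, which is proved by pairing each triple
`(τ, l, i)` with the one obtained by exchanging the value `τ l` for `i`.
Applied to `x = exp (λ • s)` it bounds the moment generating function of a sample sum drawn
without replacement by that of `p` independent draws, which Hoeffding's lemma bounds by
`exp (p (λ μ + λ² / 8))`. Chernoff's bound with `λ = 4 t` then gives each tail probability at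
most `exp (-2 p t²)`, and for `t = √(a / p) / 5` the two tails together are at most `δ`. -/

open Finset Real Function ProbabilityTheory MeasureTheory

namespace SamplingWithoutReplacement

variable {α β : Type*}

theorem sum_compl_range [Fintype α] [Fintype β] {M : Type*} [AddCommGroup M] (x : α → M)
    (f : β ↪ α) : ∑ i : {i // i ∉ Set.range f}, x i = ∑ i, x i - ∑ j, x (f j) := by
  rw [eq_sub_iff_add_eq', ← Fintype.sum_subtype_add_sum_subtype (· ∈ Set.range f) x]
  congr 1
  convert Fintype.sum_equiv (Equiv.ofInjective f f.injective) (fun j => x (f j)) (fun i => x i)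
    fun _ => rfl

theorem sum_embedding_succ_prod [Fintype α] (x : α → ℝ) (k : ℕ) :
    ∑ σ : Fin (k + 1) ↪ α, ∏ j, x (σ j) =
      ∑ τ : Fin k ↪ α, (∑ i, x i - ∑ l, x (τ l)) * ∏ j, x (τ j) := by
  rw [← (Equiv.embeddingFinSucc k α).symm.sum_comp, Fintype.sum_sigma]
  refine sum_congr rfl fun τ _ => ?_
  simp only [← sum_compl_range, sum_mul, Equiv.coe_embeddingFinSucc_symm, Fin.prod_univ_succ,
    Fin.cons_zero, Fin.cons_succ]

noncomputable def exchange (t : (β ↪ α) × β × α) : (β ↪ α) × β × α :=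
  (t.1.setValue t.2.1 t.2.2, t.2.1, t.1 t.2.1)

-- When `i = τ m`, `setValue` swaps the values at `l` and `m`, so `exchange` is an involution on
-- all triples, not only on those with `i ∉ Set.range τ`.
theorem exchange_involutive : Involutive (exchange : (β ↪ α) × β × α → _) := by
  rintro ⟨τ, l, i⟩
  simp only [exchange, Embedding.setValue_eq, Prod.mk.injEq, and_true]
  ext m
  simp only [Embedding.setValue, Embedding.coeFn_mk]
  split_ifs <;> simp_all

theorem setValue_apply_eq_swap (τ : β ↪ α) (l m j : β) :
    τ.setValue l (τ m) j = τ (Equiv.swap l m j) := by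
  simp only [Embedding.setValue, Embedding.coeFn_mk, Equiv.swap_apply_def]
  split_ifs <;> simp_all

theorem prod_setValue_of_notMem_range [Fintype β] {M : Type*} [CommMonoid M] (x : α → M)
    (τ : β ↪ α) (l : β) {i : α} (hi : i ∉ Set.range τ) :
    ∏ j, x (τ.setValue l i j) = x i * ∏ j ∈ univ.erase l, x (τ j) := by
  rw [← mul_prod_erase univ _ (mem_univ l), Embedding.setValue_eq]
  refine congrArg _ (prod_congr rfl fun j hj => ?_)
  exact congrArg x (Embedding.setValue_eq_of_ne (ne_of_mem_erase hj) fun h => hi ⟨j, h⟩)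

theorem exchange_nonneg [Fintype β] {x : α → ℝ} (hx : ∀ i, 0 ≤ x i) (τ : β ↪ α) (l : β)
    (i : α) : 0 ≤ (x (τ l) - x i) * (∏ j, x (τ j) - ∏ j, x (τ.setValue l i j)) := by
  by_cases hi : i ∈ Set.range τ
  · obtain ⟨m, rfl⟩ := hi
    simp_rw [setValue_apply_eq_swap, Equiv.prod_comp (Equiv.swap l m) (fun j => x (τ j)),
      sub_self, mul_zero, le_refl]
  · rw [prod_setValue_of_notMem_range x τ l hi, ← mul_prod_erase univ _ (mem_univ l), ← sub_mul,
      ← mul_assoc, ← sq]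
    exact mul_nonneg (sq_nonneg _) (prod_nonneg fun j _ => hx _)

theorem embedding_prod_sum_correlation [Fintype α] [Fintype β] {x : α → ℝ}
    (hx : ∀ i, 0 ≤ x i) :
    Fintype.card β * (∑ i, x i) * ∑ τ : β ↪ α, ∏ j, x (τ j) ≤
      Fintype.card α * ∑ τ : β ↪ α, (∑ l, x (τ l)) * ∏ j, x (τ j) := by
  set f : (β ↪ α) × β × α → ℝ := fun t => (∏ j, x (t.1 j)) * (x (t.1 t.2.1) - x t.2.2)
  have hsum : ∑ t, f t = Fintype.card α * ∑ τ : β ↪ α, (∑ l, x (τ l)) * ∏ j, x (τ j) -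
      Fintype.card β * (∑ i, x i) * ∑ τ : β ↪ α, ∏ j, x (τ j) := by
    simp only [f, Fintype.sum_prod_type]
    rw [mul_sum, mul_sum, ← sum_sub_distrib]
    refine sum_congr rfl fun τ _ => ?_
    simp only [mul_sub, sum_sub_distrib, sum_const, card_univ, nsmul_eq_mul, ← mul_sum]
    ring
  have hpair : ∀ t, f t + f (exchange t) =
      (x (t.1 t.2.1) - x t.2.2) * (∏ j, x (t.1 j) - ∏ j, x (t.1.setValue t.2.1 t.2.2 j)) := by
    rintro ⟨τ, l, i⟩
    simp only [f, exchange, Embedding.setValue_eq]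
    ring
  have hdouble : 2 * ∑ t, f t = ∑ t, (f t + f (exchange t)) := by
    rw [sum_add_distrib, exchange_involutive.bijective.sum_comp f]
    ring
  have hpairs_nonneg : 0 ≤ ∑ t, (f t + f (exchange t)) :=
    sum_nonneg fun t _ => (hpair t).symm ▸ exchange_nonneg hx t.1 t.2.1 t.2.2
  linarith

theorem card_mul_sum_embedding_succ_prod_le [Fintype α] {x : α → ℝ} (hx : ∀ i, 0 ≤ x i)
    (k : ℕ) :
    Fintype.card α * ∑ σ : Fin (k + 1) ↪ α, ∏ j, x (σ j) ≤
      (Fintype.card α - k) * (∑ i, x i) * ∑ τ : Fin k ↪ α, ∏ j, x (τ j) := by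
  have hcorr := embedding_prod_sum_correlation (β := Fin k) hx
  rw [Fintype.card_fin] at hcorr
  rw [sum_embedding_succ_prod]
  simp only [sub_mul, sum_sub_distrib, ← mul_sum]
  linarith

theorem card_pow_mul_sum_embedding_prod_le [Fintype α] {x : α → ℝ} (hx : ∀ i, 0 ≤ x i)
    (p : ℕ) :
    Fintype.card α ^ p * ∑ σ : Fin p ↪ α, ∏ j, x (σ j) ≤
      (Fintype.card α).descFactorial p * (∑ i, x i) ^ p := by
  induction p with
  | zero => simp
  | succ p ih =>
    rcases lt_or_ge p (Fintype.card α) with hp | hp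
    · have hS : 0 ≤ ∑ i, x i := sum_nonneg fun i _ => hx i
      have hnp : (0 : ℝ) ≤ Fintype.card α - p := by simpa using hp.le
      calc (Fintype.card α : ℝ) ^ (p + 1) * ∑ σ : Fin (p + 1) ↪ α, ∏ j, x (σ j)
          = Fintype.card α ^ p * (Fintype.card α * ∑ σ : Fin (p + 1) ↪ α, ∏ j, x (σ j)) := by
            ring
        _ ≤ Fintype.card α ^ p *
              ((Fintype.card α - p) * (∑ i, x i) * ∑ τ : Fin p ↪ α, ∏ j, x (τ j)) :=
            mul_le_mul_of_nonneg_left (card_mul_sum_embedding_succ_prod_le hx p) (by positivity)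
        _ = (Fintype.card α - p) * (∑ i, x i) *
              (Fintype.card α ^ p * ∑ τ : Fin p ↪ α, ∏ j, x (τ j)) := by ring
        _ ≤ (Fintype.card α - p) * (∑ i, x i) *
              ((Fintype.card α).descFactorial p * (∑ i, x i) ^ p) := by gcongr
        _ = (Fintype.card α).descFactorial (p + 1) * (∑ i, x i) ^ (p + 1) := by
            rw [Nat.descFactorial_succ]
            push_cast [Nat.cast_sub hp.le]
            ring
    · have : IsEmpty (Fin (p + 1) ↪ α) :=
        Embedding.isEmpty_of_card_lt (by simpa using Nat.lt_succ_of_le hp)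
      rw [Nat.descFactorial_eq_zero_iff_lt.mpr (Nat.lt_succ_of_le hp)]
      simp

theorem sum_exp_mul_le_of_mem_Icc [Fintype α] [Nonempty α] (s : α → ℝ) {a b : ℝ}
    (hs : ∀ i, s i ∈ Set.Icc a b) (t : ℝ) :
    ∑ i, exp (t * s i) ≤
      Fintype.card α * exp (t * ((∑ i, s i) / Fintype.card α) + t ^ 2 * (b - a) ^ 2 / 8) := by
  let _ : MeasurableSpace α := ⊤
  let μ : Measure α := (PMF.uniformOfFintype α).toMeasure
  set N : ℝ := (Fintype.card α : ℝ)
  set m : ℝ := (∑ i, s i) / N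
  have hN : 0 < N := by simp [N, Fintype.card_pos]
  have hmean : μ[s] = m := by
    simp [μ, m, N, PMF.integral_eq_sum, ← mul_sum, div_eq_inv_mul]
  have hmgf : mgf (fun i => s i - m) μ t = N⁻¹ * (∑ i, exp (t * s i)) / exp (t * m) := by
    simp only [mgf, μ, PMF.integral_eq_sum, PMF.uniformOfFintype_apply, smul_eq_mul,
      mul_sub, exp_sub, ENNReal.toReal_inv, ENNReal.toReal_natCast, ← mul_sum,
      ← sum_div, N, mul_div_assoc]
  have hoeffding := (hasSubgaussianMGF_of_mem_Icc (μ := μ) (measurable_of_finite s).aemeasurable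
    (Filter.Eventually.of_forall hs)).mgf_le t
  have hc : (((‖b - a‖₊ / 2) ^ 2 : NNReal) : ℝ) = (b - a) ^ 2 / 4 := by
    simp [div_pow, sq_abs]; ring
  rw [hmean, hmgf, hc, div_le_iff₀ (exp_pos _), inv_mul_le_iff₀ hN, ← exp_add] at hoeffding
  exact hoeffding.trans_eq (by ring_nf)

theorem card_upper_tail_le [Fintype α] [Nonempty α] {s : α → ℝ} (hs : ∀ i, s i ∈ Set.Icc 0 1)
    (p : ℕ) {t : ℝ} (ht : 0 ≤ t) :
    (#{σ : Fin p ↪ α | p * ((∑ i, s i) / Fintype.card α + t) ≤ ∑ k, s (σ k)} : ℝ) ≤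
      Fintype.card (Fin p ↪ α) * exp (-2 * p * t ^ 2) := by
  set N : ℝ := (Fintype.card α : ℝ)
  set m := (∑ i, s i) / N
  set B : Finset (Fin p ↪ α) := {σ | p * (m + t) ≤ ∑ k, s (σ k)}
  set x : α → ℝ := fun i => exp (4 * t * s i)
  have hN : 0 < N := by simp [N, Fintype.card_pos]
  have hchernoff : (#B : ℝ) * exp (4 * t * (p * (m + t))) ≤ ∑ σ : Fin p ↪ α, ∏ k, x (σ k) := by
    rw [← nsmul_eq_mul]
    refine (card_nsmul_le_sum B _ _ fun σ hσ => ?_).trans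
      (sum_le_sum_of_subset_of_nonneg (subset_univ B) fun σ _ _ => by positivity)
    rw [← exp_sum, ← mul_sum]
    exact exp_le_exp.mpr (mul_le_mul_of_nonneg_left (mem_filter.mp hσ).2 (by positivity))
  have hhoeffding : ∑ i, x i ≤ N * exp (4 * t * m + (4 * t) ^ 2 / 8) := by
    simpa using sum_exp_mul_le_of_mem_Icc s hs (4 * t)
  have hkey : (#B : ℝ) * exp (4 * t * (p * (m + t))) ≤
      (Fintype.card α).descFactorial p * exp (p * (4 * t * m + (4 * t) ^ 2 / 8)) := by
    refine le_of_mul_le_mul_left ?_ (pow_pos hN p)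
    calc N ^ p * (#B * exp (4 * t * (p * (m + t))))
        ≤ N ^ p * ∑ σ : Fin p ↪ α, ∏ k, x (σ k) := by gcongr
      _ ≤ (Fintype.card α).descFactorial p * (∑ i, x i) ^ p :=
          card_pow_mul_sum_embedding_prod_le (x := x) (fun i => (exp_pos _).le) p
      _ ≤ (Fintype.card α).descFactorial p * (N * exp (4 * t * m + (4 * t) ^ 2 / 8)) ^ p :=
          mul_le_mul_of_nonneg_left
            (pow_le_pow_left₀ (sum_nonneg fun i _ => (exp_pos _).le) hhoeffding p) (by positivity)
      _ = N ^ p * ((Fintype.card α).descFactorial p *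
            exp (p * (4 * t * m + (4 * t) ^ 2 / 8))) := by
          rw [mul_pow, ← exp_nat_mul]
          ring
  rw [Fintype.card_embedding_eq, Fintype.card_fin]
  rw [← le_div_iff₀ (exp_pos _), mul_div_assoc, ← exp_sub] at hkey
  exact hkey.trans_eq (by ring_nf)

theorem card_deviation_le [Fintype α] [Nonempty α] {s : α → ℝ} (hs : ∀ i, s i ∈ Set.Icc 0 1)
    {p : ℕ} (hp : 0 < p) {t : ℝ} (ht : 0 ≤ t) :
    (#{σ : Fin p ↪ α | t ≤ |(∑ k, s (σ k)) / p - (∑ i, s i) / Fintype.card α|} : ℝ) ≤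
      2 * Fintype.card (Fin p ↪ α) * exp (-2 * p * t ^ 2) := by
  have hs' : ∀ i, 1 - s i ∈ Set.Icc 0 1 :=
    fun i => ⟨by linarith [(hs i).2], by linarith [(hs i).1]⟩
  have hupper := card_upper_tail_le hs p ht
  have hlower := card_upper_tail_le hs' p ht
  set U : Finset (Fin p ↪ α) := {σ | p * ((∑ i, s i) / Fintype.card α + t) ≤ ∑ k, s (σ k)}
  set L : Finset (Fin p ↪ α) :=
    {σ | p * ((∑ i, (1 - s i)) / Fintype.card α + t) ≤ ∑ k, (1 - s (σ k))}
  have hN : (Fintype.card α : ℝ) ≠ 0 := by simp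
  have hp' : (0 : ℝ) < p := by exact_mod_cast hp
  have hsub : ({σ | t ≤ |(∑ k, s (σ k)) / p - (∑ i, s i) / Fintype.card α|} : Finset _) ⊆
      U ∪ L := by
    intro σ hσ
    simp only [U, L, mem_filter, mem_univ, true_and, mem_union, sum_sub_distrib, sum_const,
      card_univ, Fintype.card_fin, nsmul_eq_mul, mul_one, sub_div, div_self hN] at hσ ⊢
    have hS : ∑ k, s (σ k) = p * ((∑ k, s (σ k)) / p) := (mul_div_cancel₀ _ hp'.ne').symm
    rcases le_abs'.mp hσ with h | h
    · right
      have := mul_le_mul_of_nonneg_left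
        (show 1 - (∑ i, s i) / Fintype.card α + t ≤ 1 - (∑ k, s (σ k)) / p by linarith) hp'.le
      linarith
    · left
      have := mul_le_mul_of_nonneg_left
        (show (∑ i, s i) / Fintype.card α + t ≤ (∑ k, s (σ k)) / p by linarith) hp'.le
      linarith
  calc _ ≤ (#(U ∪ L) : ℝ) := by exact_mod_cast card_le_card hsub
    _ ≤ #U + #L := by exact_mod_cast card_union_le U L
    _ ≤ _ := by linarith

theorem ofReal_one_sub_le_toOuterMeasure_uniformOfFintype [Fintype β] [Nonempty β]
    {S : Set β} {δ : ℝ} (h : (#{x | x ∉ S} : ℝ) ≤ δ * Fintype.card β) :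
    ENNReal.ofReal (1 - δ) ≤ (PMF.uniformOfFintype β).toOuterMeasure S := by
  have hcard : (#{x | x ∈ S} : ℝ) + #{x | x ∉ S} = Fintype.card β := by
    exact_mod_cast card_filter_add_card_filter_not (s := univ) (· ∈ S)
  rw [PMF.toOuterMeasure_uniformOfFintype_apply, Fintype.card_subtype,
    ENNReal.le_div_iff_mul_le (by simp) (by simp), ← ENNReal.ofReal_natCast,
    ← ENNReal.ofReal_mul' (Nat.cast_nonneg _), ← ENNReal.ofReal_natCast]
  exact ENNReal.ofReal_le_ofReal (by linarith)

end SamplingWithoutReplacement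

open SamplingWithoutReplacement

/-- **High-probability validity of the UCB with sufficient exploration.**
Let `s 1, …, s n ∈ [0,1]` be a finite population with mean `μ`, draw
`X 1, …, X p` (with `1 ≤ p ≤ n`) uniformly at random without replacement
(i.e. pick a uniformly random injection `σ : Fin p ↪ Fin n` and set `X k = s (σ k)`),
and fix `δ ∈ (0,1)`.  If `a ≥ (25/2)·log(2/δ)`, then with probability at least `1 - δ`
the empirical mean satisfies `|(X 1 + ⋯ + X p)/p - μ| < (1/5)·√(a/p)`; in particular,
the upper confidence bound `(X 1 + ⋯ + X p)/p + √(a/p)` exceeds `μ` with probability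
at least `1 - δ`. -/
theorem ucb_exceeds_true_mean
    (n p : ℕ) (hp : 1 ≤ p) (hpn : p ≤ n)
    (s : Fin n → ℝ) (hs : ∀ j, s j ∈ Set.Icc (0 : ℝ) 1)
    (μ : ℝ) (hμ : μ = (∑ j, s j) / n)
    (δ : ℝ) (hδ0 : 0 < δ) (hδ1 : δ < 1)
    (a : ℝ) (ha : 25 / 2 * Real.log (2 / δ) ≤ a) :
    haveI : Nonempty (Fin p ↪ Fin n) :=
      ⟨⟨Fin.castLE hpn, Fin.castLE_injective hpn⟩⟩
    ENNReal.ofReal (1 - δ) ≤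
        (PMF.uniformOfFintype (Fin p ↪ Fin n)).toOuterMeasure
          {σ | |(∑ k, s (σ k)) / p - μ| < (1 / 5) * Real.sqrt (a / p)} ∧
      ENNReal.ofReal (1 - δ) ≤
        (PMF.uniformOfFintype (Fin p ↪ Fin n)).toOuterMeasure
          {σ | μ < (∑ k, s (σ k)) / p + Real.sqrt (a / p)} := by
  have : Nonempty (Fin p ↪ Fin n) := ⟨⟨Fin.castLE hpn, Fin.castLE_injective hpn⟩⟩
  have : Nonempty (Fin n) := ⟨⟨0, hp.trans hpn⟩⟩
  have hlog : 0 < log (2 / δ) := log_pos (by rw [lt_div_iff₀ hδ0]; linarith)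
  have ha0 : 0 ≤ a := by linarith
  set t := 1 / 5 * √(a / p) with ht_def
  have ht : 0 ≤ t := by positivity
  have htails : 2 * exp (-2 * p * t ^ 2) ≤ δ := by
    have hexponent : -2 * p * t ^ 2 = -(2 / 25 * a) := by
      rw [ht_def, mul_pow, sq_sqrt (by positivity)]
      field_simp
      ring
    calc 2 * exp (-2 * p * t ^ 2) ≤ 2 * exp (-log (2 / δ)) := by
          rw [hexponent]; gcongr; linarith
      _ = δ := by rw [exp_neg, exp_log (by positivity)]; field_simp
  have hclose : ENNReal.ofReal (1 - δ) ≤ (PMF.uniformOfFintype (Fin p ↪ Fin n)).toOuterMeasure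
      {σ | |(∑ k, s (σ k)) / p - μ| < t} := by
    refine ofReal_one_sub_le_toOuterMeasure_uniformOfFintype ?_
    have hdev := card_deviation_le hs hp ht
    simp only [Fintype.card_fin, ← hμ] at hdev
    simp only [Set.mem_ofPred_eq, not_lt]
    nlinarith [Nat.cast_nonneg (α := ℝ) (Fintype.card (Fin p ↪ Fin n))]
  refine ⟨hclose, hclose.trans (OuterMeasure.mono _ fun σ hσ => ?_)⟩
  simp only [Set.mem_ofPred_eq, abs_lt] at hσ ⊢
  linarith [sqrt_nonneg (a / p)]
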